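/- With W_j := π_j(𝔯(V)) and A_j := α_j(𝔯(V)) the following equalities of subspaces hold: A₁ = W₁; W₂ + W₅ = A₂ + A₃ (and these sums are direct); W₃ + W₄ = A₄ + A₅ (and these sums are direct); A₆ = W₆; A₇ = W₇; A₈ = W₈. -/

import Mathlib

open scoped BigOperators
open Pointwise

namespace GCT

variable {V : Type*} [AddCommGroup V] [Module ℝ V]

/-- Linearity of a real valued function of one vector variable. -/
def IsLin (f : V → ℝ) : Prop :=
  (∀ x y : V, f (x + y) = f x + f y) ∧ (∀ (c : ℝ) (x : V), f (c • x) = c * f x)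

/-- Bilinearity. -/
def IsBilin (h : V → V → ℝ) : Prop :=
  (∀ y, IsLin (fun x => h x y)) ∧ (∀ x, IsLin (fun y => h x y))

/-- 4-linearity. -/
def IsMulti4 (F : V → V → V → V → ℝ) : Prop :=
  (∀ y z w, IsLin (fun x => F x y z w)) ∧ (∀ x z w, IsLin (fun y => F x y z w)) ∧
    (∀ x y w, IsLin (fun z => F x y z w)) ∧ (∀ x y z, IsLin (fun w => F x y z w))

/-- The space 𝔯(V) of generalized curvature tensors. -/
def rSet (V : Type*) [AddCommGroup V] [Module ℝ V] : Set (V → V → V → V → ℝ) :=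
  {F | IsMulti4 F ∧ (∀ x y z w, F x y z w = - F y x z w) ∧
    (∀ x y z w, F x y z w + F y z x w + F z x y w = 0)}

/-- The space 𝔞(V) of algebraic curvature tensors. -/
def aSet (V : Type*) [AddCommGroup V] [Module ℝ V] : Set (V → V → V → V → ℝ) :=
  {F | F ∈ rSet V ∧ ∀ x y z w, F x y z w = - F x y w z}

/-- The space 𝔰(V). -/
def sSet (V : Type*) [AddCommGroup V] [Module ℝ V] : Set (V → V → V → V → ℝ) :=
  {F | F ∈ rSet V ∧ ∀ x y z w, F x y z w = F x y w z}

/-- The conjugate tensor R*. -/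
def conj (F : V → V → V → V → ℝ) : V → V → V → V → ℝ := fun x y z w => - F x y w z

/-- The product h·k of two bilinear forms. -/
def prodB (h k : V → V → ℝ) : V → V → V → V → ℝ := fun x y z w => h x y * k z w

/-- The wedge product h ∧_t k of two bilinear forms. -/
def wedge (t : ℝ) (h k : V → V → ℝ) : V → V → V → V → ℝ :=
  fun x y z w => h x z * k y w - h y z * k x w - t * (h x w * k y z - h y w * k x z)

/-- Antisymmetric part Λh. -/
noncomputable def lamB (h : V → V → ℝ) : V → V → ℝ := fun x y => (h x y - h y x) / 2

/-- Symmetric part Sh. -/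
noncomputable def symB (h : V → V → ℝ) : V → V → ℝ := fun x y => (h x y + h y x) / 2

/-- The idempotent ψ. -/
noncomputable def psi (F : V → V → V → V → ℝ) : V → V → V → V → ℝ :=
  fun x y z w => (F x y z w + F y x w z + F z w x y + F w z y x) / 4

/-- The idempotent μ. -/
noncomputable def mu (F : V → V → V → V → ℝ) : V → V → V → V → ℝ :=
  fun x y z w =>
    (3 * F x y z w + 3 * F x y w z + F x w z y + F x z w y + F w y z x + F z y w x) / 8

/-- A linear equivalence is a g-isometry. -/
def IsIsometry (g : V → V → ℝ) (φ : V ≃ₗ[ℝ] V) : Prop := ∀ x y, g (φ x) (φ y) = g x y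

/-- Pull back of a 4-tensor along a linear equivalence (the natural action). -/
def pullT (φ : V ≃ₗ[ℝ] V) (F : V → V → V → V → ℝ) : V → V → V → V → ℝ :=
  fun x y z w => F (φ x) (φ y) (φ z) (φ w)

/-- Invariance of a set of 4-tensors under the orthogonal group O(V,g). -/
def OInv (g : V → V → ℝ) (S : Set (V → V → V → V → ℝ)) : Prop :=
  ∀ φ : V ≃ₗ[ℝ] V, IsIsometry g φ → ∀ F ∈ S, pullT φ F ∈ S

/-- Irreducibility of a subspace of 4-tensors as an O(V,g)-module:
there is no proper nonzero invariant subspace. -/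
def OIrred (g : V → V → ℝ) (W : Set (V → V → V → V → ℝ)) : Prop :=
  ∀ U : Submodule ℝ (V → V → V → V → ℝ), (U : Set (V → V → V → V → ℝ)) ⊆ W →
    (∀ φ : V ≃ₗ[ℝ] V, IsIsometry g φ → ∀ F ∈ U, pullT φ F ∈ U) →
    (U : Set (V → V → V → V → ℝ)) = {0} ∨ (U : Set (V → V → V → V → ℝ)) = W

/-- Isomorphism of two invariant subspaces as O(V,g)-modules. -/
def OEquivMod (g : V → V → ℝ) (S T : Set (V → V → V → V → ℝ)) : Prop :=
  ∃ e : (V → V → V → V → ℝ) →ₗ[ℝ] (V → V → V → V → ℝ),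
    Set.BijOn e S T ∧
      ∀ φ : V ≃ₗ[ℝ] V, IsIsometry g φ → ∀ F ∈ S, e (pullT φ F) = pullT φ (e F)

variable (n : ℕ) (b : Module.Basis (Fin n) ℝ V) (g : V → V → ℝ)

/-- Inverse metric components g^{ij}. -/
noncomputable def ginv : Matrix (Fin n) (Fin n) ℝ :=
  (Matrix.of fun i j => g (b i) (b j))⁻¹

/-- Ric(R)(x,y) := Σ g^{ij} R(e_i,x,y,e_j). -/
noncomputable def Ric (F : V → V → V → V → ℝ) : V → V → ℝ :=
  fun x y => ∑ i, ∑ j, ginv n b g i j * F (b i) x y (b j)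

/-- Ric*(R)(x,y) := Σ g^{ij} R(x,e_i,e_j,y). -/
noncomputable def RicS (F : V → V → V → V → ℝ) : V → V → ℝ :=
  fun x y => ∑ i, ∑ j, ginv n b g i j * F x (b i) (b j) y

/-- The generalized scalar curvature τ(R). -/
noncomputable def tau (F : V → V → V → V → ℝ) : ℝ :=
  ∑ i, ∑ j, ∑ k, ∑ l, ginv n b g i l * ginv n b g j k * F (b i) (b j) (b k) (b l)

/-- The g-trace of a bilinear form. -/
noncomputable def trg (h : V → V → ℝ) : ℝ := ∑ i, ∑ j, ginv n b g i j * h (b i) (b j)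

/-- The scalar product on 4-tensors given by full contraction with g. -/
noncomputable def inner4 (F T : V → V → V → V → ℝ) : ℝ :=
  ∑ i, ∑ j, ∑ k, ∑ l, ∑ i', ∑ j', ∑ k', ∑ l',
    ginv n b g i i' * ginv n b g j j' * ginv n b g k k' * ginv n b g l l' *
      F (b i) (b j) (b k) (b l) * T (b i') (b j') (b k') (b l')

/-- W-projection π₁. -/
noncomputable def pi1 (F : V → V → V → V → ℝ) : V → V → V → V → ℝ :=
  (-(tau n b g F) / ((n : ℝ) * ((n : ℝ) - 1))) • wedge 0 g g

/-- W-projection π₂. -/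
noncomputable def pi2 (F : V → V → V → V → ℝ) : V → V → V → V → ℝ :=
  ((1 : ℝ) / ((n : ℝ) - 1)) • wedge 0 (((tau n b g F) / (n : ℝ)) • g - symB (Ric n b g F)) g

/-- W-projection π₃. -/
noncomputable def pi3 (F : V → V → V → V → ℝ) : V → V → V → V → ℝ :=
  ((-1 : ℝ) / ((n : ℝ) + 1)) •
    ((2 : ℝ) • prodB (lamB (Ric n b g F)) g + wedge 0 (lamB (Ric n b g F)) g)

/-- W-projection π₄. -/
noncomputable def pi4 (F : V → V → V → V → ℝ) : V → V → V → V → ℝ :=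
  ((-1 : ℝ) / ((n : ℝ) ^ 2 - 4)) •
      ((2 : ℝ) • prodB (lamB (RicS n b g F)) g + wedge ((n : ℝ) + 1) (lamB (RicS n b g F)) g)
    - ((3 : ℝ) / (((n : ℝ) ^ 2 - 4) * ((n : ℝ) + 1))) •
      ((2 : ℝ) • prodB (lamB (Ric n b g F)) g + wedge ((n : ℝ) + 1) (lamB (Ric n b g F)) g)

/-- W-projection π₅. -/
noncomputable def pi5 (F : V → V → V → V → ℝ) : V → V → V → V → ℝ :=
  ((1 : ℝ) / (((n : ℝ) - 1) * ((n : ℝ) - 2))) •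
    ((tau n b g F) • wedge 0 g g -
      ((1 : ℝ) / (n : ℝ)) •
        wedge ((n : ℝ) - 1) (symB (Ric n b g F + ((n : ℝ) - 1) • RicS n b g F)) g)

/-- W-projection π₆. -/
noncomputable def pi6 (F : V → V → V → V → ℝ) : V → V → V → V → ℝ :=
  psi F + ((1 : ℝ) / (2 * ((n : ℝ) - 2))) • wedge 1 (symB (Ric n b g F + RicS n b g F)) g
    - ((tau n b g F) / (((n : ℝ) - 1) * ((n : ℝ) - 2))) • wedge 0 g g

/-- W-projection π₇. -/
noncomputable def pi7 (F : V → V → V → V → ℝ) : V → V → V → V → ℝ :=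
  mu F + ((1 : ℝ) / (2 * (n : ℝ))) • wedge (-1) (symB (Ric n b g F - RicS n b g F)) g
    + ((1 : ℝ) / (2 * ((n : ℝ) + 2))) • prodB (lamB ((3 : ℝ) • Ric n b g F - RicS n b g F)) g
    + ((1 : ℝ) / (4 * ((n : ℝ) + 2))) • wedge (-1) (lamB ((3 : ℝ) • Ric n b g F - RicS n b g F)) g

/-- W-projection π₈. -/
noncomputable def pi8 (F : V → V → V → V → ℝ) : V → V → V → V → ℝ :=
  F - psi F - mu F
    + ((1 : ℝ) / (2 * ((n : ℝ) - 2))) • prodB (lamB (Ric n b g F + RicS n b g F)) g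
    + ((1 : ℝ) / (4 * ((n : ℝ) - 2))) • wedge 3 (lamB (Ric n b g F + RicS n b g F)) g

/-- A-projection α₁. -/
noncomputable def al1 (F : V → V → V → V → ℝ) : V → V → V → V → ℝ :=
  (-(tau n b g F) / ((n : ℝ) * ((n : ℝ) - 1))) • wedge 0 g g

/-- A-projection α₂. -/
noncomputable def al2 (F : V → V → V → V → ℝ) : V → V → V → V → ℝ :=
  ((-1 : ℝ) / (2 * ((n : ℝ) - 2))) • wedge 1 (symB (Ric n b g F + RicS n b g F)) g
    + ((2 * tau n b g F) / ((n : ℝ) * ((n : ℝ) - 2))) • wedge 0 g g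

/-- A-projection α₃. -/
noncomputable def al3 (F : V → V → V → V → ℝ) : V → V → V → V → ℝ :=
  ((-1 : ℝ) / (2 * (n : ℝ))) • wedge (-1) (symB (Ric n b g F - RicS n b g F)) g

/-- A-projection α₄. -/
noncomputable def al4 (F : V → V → V → V → ℝ) : V → V → V → V → ℝ :=
  ((-1 : ℝ) / (4 * ((n : ℝ) + 2))) •
    ((2 : ℝ) • prodB (lamB ((3 : ℝ) • Ric n b g F - RicS n b g F)) g
      + wedge (-1) (lamB ((3 : ℝ) • Ric n b g F - RicS n b g F)) g)

/-- A-projection α₅. -/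
noncomputable def al5 (F : V → V → V → V → ℝ) : V → V → V → V → ℝ :=
  ((-1 : ℝ) / (4 * ((n : ℝ) - 2))) •
    ((2 : ℝ) • prodB (lamB (Ric n b g F + RicS n b g F)) g
      + wedge 3 (lamB (Ric n b g F + RicS n b g F)) g)

/-- A-projection α₆. -/
noncomputable def al6 (F : V → V → V → V → ℝ) : V → V → V → V → ℝ :=
  psi F - al1 n b g F - al2 n b g F

/-- A-projection α₇. -/
noncomputable def al7 (F : V → V → V → V → ℝ) : V → V → V → V → ℝ :=
  mu F - al3 n b g F - al4 n b g F

/-- A-projection α₈. -/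
noncomputable def al8 (F : V → V → V → V → ℝ) : V → V → V → V → ℝ :=
  F - mu F - psi F - al5 n b g F

/-- Curvature tensors of constant curvature type. -/
noncomputable def uSet : Set (V → V → V → V → ℝ) :=
  {F | ∃ c : ℝ, ∀ x y z w, F x y z w = c * (g x w * g y z - g x z * g y w)}

/-- Ricci traceless algebraic curvature tensors built from a traceless symmetric form. -/
noncomputable def zSet : Set (V → V → V → V → ℝ) :=
  {F | ∃ Xi : V → V → ℝ, IsBilin Xi ∧ (∀ x y, Xi x y = Xi y x) ∧ trg n b g Xi = 0 ∧
    ∀ x y z w, F x y z w = Xi x w * g y z + g x w * Xi y z - Xi x z * g y w - g x z * Xi y w}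

/-- Weyl type (Ricci flat algebraic) curvature tensors. -/
noncomputable def wSet : Set (V → V → V → V → ℝ) :=
  {F | F ∈ aSet V ∧ Ric n b g F = fun _ _ => 0}

/-- The projective curvature tensor p(R). -/
noncomputable def pProj (F : V → V → V → V → ℝ) : V → V → V → V → ℝ :=
  F - pi1 n b g F - pi2 n b g F - pi3 n b g F

/-!
The projections `π₂, …, π₅` and `α₂, …, α₅` see `R` only through `Ric`, `Ric*` and `τ`, and the
image of each one is the image of a member of one of two pencils of linear maps. In the symmetric
sector the pencil is `h ↦ h ∧_t g` on symmetric `g`-traceless `h` (`t = 0, n - 1` for `π₂, π₅` and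
`t = 1, -1` for `α₂, α₃`); in the antisymmetric sector it is `h ↦ 2 h·g + h ∧_t g` on antisymmetric
`h` (`t = 0, n + 1` for `π₃, π₄` and `t = -1, 3` for `α₄, α₅`). Each image is identified by writing
`π(R)` in this form and checking that `π` fixes every tensor of this form.

Both pencils have the form `A + t C` with `C h (x, y, z, w) = h(y, w) g(x, z) - h(x, w) g(y, z)`,
so the images of any two distinct members sum to `A(P) + C(P)`. The sums are direct because `Ric`
and `Ric*` send `A h` and `C h` to fixed multiples of `h`; the resulting `2 × 2` system has
determinant `n (n - 2)`, resp. `n² - 4`, which is nonzero for `n ≥ 3`. The remaining equalities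
already hold as identities between the maps `αⱼ` and `πⱼ`.
-/

section Pencil

variable {M N : Type*} [AddCommGroup M] [Module ℝ M] [AddCommGroup N] [Module ℝ N]
  {P : Submodule ℝ M} {f : ℝ → M →ₗ[ℝ] N} {B : M →ₗ[ℝ] N}

def IsDirectSum (S T : Set N) : Prop :=
  ∀ u ∈ S, ∀ v ∈ T, ∀ u' ∈ S, ∀ v' ∈ T, u + v = u' + v' → u = u' ∧ v = v'

lemma map_le_sup_map {f₀ f₁ f₂ : M →ₗ[ℝ] N} (a₁ a₂ : ℝ) (h : f₀ = a₁ • f₁ + a₂ • f₂) :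
    P.map f₀ ≤ P.map f₁ ⊔ P.map f₂ := by
  rintro _ ⟨p, hp, rfl⟩
  refine Submodule.mem_sup.2 ⟨f₁ (a₁ • p), ⟨_, P.smul_mem a₁ hp, rfl⟩, f₂ (a₂ • p),
    ⟨_, P.smul_mem a₂ hp, rfl⟩, ?_⟩
  simp [h]

lemma map_pencil_sup (hf : ∀ t, f t = f 0 + t • B) {s t : ℝ} (hst : s ≠ t) :
    P.map (f s) ⊔ P.map (f t) = P.map (f 0) ⊔ P.map B := by
  have hts : t - s ≠ 0 := sub_ne_zero.2 hst.symm
  rw [hf s, hf t]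
  refine le_antisymm (sup_le (map_le_sup_map 1 s (by simp)) (map_le_sup_map 1 t (by simp)))
    (sup_le (map_le_sup_map (t / (t - s)) (-s / (t - s)) ?_)
      (map_le_sup_map (-1 / (t - s)) (1 / (t - s)) ?_)) <;>
  · ext p
    simp only [LinearMap.add_apply, LinearMap.smul_apply]
    match_scalars <;> field_simp <;> ring

lemma image_pencil_add_image_pencil (hf : ∀ t, f t = f 0 + t • B) {s t s' t' : ℝ}
    (hst : s ≠ t) (hst' : s' ≠ t') :
    f s '' P + f t '' P = f s' '' P + f t' '' P := by
  simp only [← Submodule.map_coe, ← Submodule.coe_sup, map_pencil_sup hf hst,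
    map_pencil_sup hf hst']

lemma isDirectSum_image_pencil (hf : ∀ t, f t = f 0 + t • B)
    (hinj : ∀ {r q}, r ∈ P → q ∈ P → f 0 r + B q = 0 → r = 0 ∧ q = 0) {s t : ℝ} (hst : s ≠ t) :
    IsDirectSum (f s '' P) (f t '' P) := by
  rintro _ ⟨p, hp, rfl⟩ _ ⟨q, hq, rfl⟩ _ ⟨p', hp', rfl⟩ _ ⟨q', hq', rfl⟩ h
  obtain ⟨h₁, h₂⟩ := hinj (add_mem (sub_mem hp hp') (sub_mem hq hq'))
    (add_mem (P.smul_mem s (sub_mem hp hp')) (P.smul_mem t (sub_mem hq hq')))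
    (by rw [← sub_eq_zero_of_eq h, hf s, hf t]
        simp only [map_add, map_sub, map_smul, LinearMap.add_apply, LinearMap.smul_apply]
        module)
  have hpp' : (s - t) • (p - p') = 0 := by linear_combination (norm := module) h₂ - t • h₁
  obtain rfl : p = p' := sub_eq_zero.1 ((smul_eq_zero.1 hpp').resolve_left (sub_ne_zero.2 hst))
  exact ⟨rfl, add_left_cancel h⟩

lemma injOn_of_det {A : M →ₗ[ℝ] N} {ρ σ : N →ₗ[ℝ] M} {a₁ b₁ a₂ b₂ : ℝ}
    (hdet : a₁ * b₂ - a₂ * b₁ ≠ 0)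
    (hρA : ∀ r ∈ P, ρ (A r) = a₁ • r) (hρB : ∀ r ∈ P, ρ (B r) = b₁ • r)
    (hσA : ∀ r ∈ P, σ (A r) = a₂ • r) (hσB : ∀ r ∈ P, σ (B r) = b₂ • r)
    {r q : M} (hr : r ∈ P) (hq : q ∈ P) (h : A r + B q = 0) : r = 0 ∧ q = 0 := by
  have hρ : a₁ • r + b₁ • q = 0 := by rw [← hρA r hr, ← hρB q hq, ← map_add, h, map_zero]
  have hσ : a₂ • r + b₂ • q = 0 := by rw [← hσA r hr, ← hσB q hq, ← map_add, h, map_zero]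
  have hr' : (a₁ * b₂ - a₂ * b₁) • r = 0 := by
    linear_combination (norm := module) b₂ • hρ - b₁ • hσ
  have hq' : (a₁ * b₂ - a₂ * b₁) • q = 0 := by
    linear_combination (norm := module) a₁ • hσ - a₂ • hρ
  exact ⟨(smul_eq_zero.1 hr').resolve_left hdet, (smul_eq_zero.1 hq').resolve_left hdet⟩

end Pencil

section Tensors

variable {V : Type*} (g : V → V → ℝ)

@[simps]
def wedgeₗ : (V → V → ℝ) →ₗ[ℝ] (V → V → V → V → ℝ) where
  toFun h := wedge 0 h g
  map_add' h k := by funext x y z w; simp only [wedge, Pi.add_apply]; ring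
  map_smul' c h := by
    funext x y z w; simp only [wedge, Pi.smul_apply, smul_eq_mul, RingHom.id_apply]; ring

@[simps]
def crossₗ : (V → V → ℝ) →ₗ[ℝ] (V → V → V → V → ℝ) where
  toFun h x y z w := h y w * g x z - h x w * g y z
  map_add' h k := by funext x y z w; simp only [Pi.add_apply]; ring
  map_smul' c h := by
    funext x y z w; simp only [Pi.smul_apply, smul_eq_mul, RingHom.id_apply]; ring

@[simps]
def prodₗ : (V → V → ℝ) →ₗ[ℝ] (V → V → V → V → ℝ) where
  toFun h := prodB h g
  map_add' h k := by funext x y z w; simp only [prodB, Pi.add_apply]; ring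
  map_smul' c h := by
    funext x y z w; simp only [prodB, Pi.smul_apply, smul_eq_mul, RingHom.id_apply]; ring

def symPencil (t : ℝ) : (V → V → ℝ) →ₗ[ℝ] (V → V → V → V → ℝ) := wedgeₗ g + t • crossₗ g

def skewPencil (t : ℝ) : (V → V → ℝ) →ₗ[ℝ] (V → V → V → V → ℝ) :=
  (2 : ℝ) • prodₗ g + wedgeₗ g + t • crossₗ g

lemma symPencil_eq (t : ℝ) : symPencil g t = symPencil g 0 + t • crossₗ g := by
  simp [symPencil]

lemma skewPencil_eq (t : ℝ) : skewPencil g t = skewPencil g 0 + t • crossₗ g := by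
  simp [skewPencil]

lemma symPencil_apply (t : ℝ) (h : V → V → ℝ) : symPencil g t h = wedge t h g := by
  funext x y z w
  simp only [symPencil, LinearMap.add_apply, LinearMap.smul_apply, wedgeₗ_apply, crossₗ_apply,
    wedge, Pi.add_apply, Pi.smul_apply, smul_eq_mul]
  ring

lemma skewPencil_apply (t : ℝ) (h : V → V → ℝ) :
    skewPencil g t h = (2 : ℝ) • prodB h g + wedge t h g := by
  funext x y z w
  simp only [skewPencil, LinearMap.add_apply, LinearMap.smul_apply, wedgeₗ_apply, crossₗ_apply,
    prodₗ_apply, wedge, Pi.add_apply, Pi.smul_apply, smul_eq_mul]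
  ring

variable (V) in
def symmForms : Submodule ℝ (V → V → ℝ) where
  carrier := {h | ∀ x y, h x y = h y x}
  add_mem' hh hk x y := by simp only [Pi.add_apply, hh x y, hk x y]
  zero_mem' _ _ := rfl
  smul_mem' c _ hh x y := by simp only [Pi.smul_apply, hh x y]

variable (V) in
def skewForms : Submodule ℝ (V → V → ℝ) where
  carrier := {h | ∀ x y, h x y = - h y x}
  add_mem' hh hk x y := by simp only [Pi.add_apply, hh x y, hk x y, neg_add]
  zero_mem' _ _ := by simp
  smul_mem' c _ hh x y := by simp only [Pi.smul_apply, hh x y, smul_neg]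

lemma swap_eq_neg_of_mem_skewForms {p : V → V → ℝ} (hp : p ∈ skewForms V) :
    (fun x y => p y x) = -p := by
  funext x y; simp [hp x y]

end Tensors

section Linearity

variable {V : Type*} [AddCommGroup V] [Module ℝ V]

lemma IsLin.add {f f' : V → ℝ} (hf : IsLin f) (hf' : IsLin f') : IsLin (fun x => f x + f' x) :=
  ⟨fun x y => by simp only [hf.1, hf'.1]; ring, fun c x => by simp only [hf.2, hf'.2]; ring⟩

lemma IsLin.const_mul {f : V → ℝ} (hf : IsLin f) (c : ℝ) : IsLin (fun x => c * f x) :=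
  ⟨fun x y => by simp only [hf.1, mul_add], fun a x => by simp only [hf.2, mul_left_comm]⟩

lemma IsLin.sum {ι : Type*} (s : Finset ι) {f : ι → V → ℝ} (hf : ∀ i, IsLin (f i)) :
    IsLin (fun x => ∑ i ∈ s, f i x) :=
  ⟨fun x y => by simp only [(hf _).1, Finset.sum_add_distrib],
    fun a x => by simp only [(hf _).2, Finset.mul_sum]⟩

lemma IsLin.sum_repr_mul {ι : Type*} [Fintype ι] {f : V → ℝ} (hf : IsLin f)
    (b : Module.Basis ι ℝ V) (x : V) : ∑ i, b.repr x i * f (b i) = f x := by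
  let φ : V →ₗ[ℝ] ℝ := ⟨⟨f, hf.1⟩, hf.2⟩
  have h := congrArg φ (b.sum_repr x)
  rw [map_sum] at h
  simp only [map_smul, smul_eq_mul] at h
  exact h

variable {h k : V → V → ℝ} {F G : V → V → V → V → ℝ}

lemma IsBilin.add_left (hh : IsBilin h) (x y z : V) : h (x + y) z = h x z + h y z :=
  (hh.1 z).1 x y

lemma IsBilin.add_right (hh : IsBilin h) (x y z : V) : h x (y + z) = h x y + h x z :=
  (hh.2 x).1 y z

lemma IsBilin.smul_left (hh : IsBilin h) (c : ℝ) (x y : V) : h (c • x) y = c * h x y :=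
  (hh.1 y).2 c x

lemma IsBilin.smul_right (hh : IsBilin h) (c : ℝ) (x y : V) : h x (c • y) = c * h x y :=
  (hh.2 x).2 c y

lemma isBilin_symB (hh : IsBilin h) : IsBilin (symB h) := by
  refine ⟨fun y => ⟨fun u v => ?_, fun c u => ?_⟩, fun x => ⟨fun u v => ?_, fun c u => ?_⟩⟩ <;>
  simp only [symB, hh.add_left, hh.add_right, hh.smul_left, hh.smul_right] <;> ring

lemma isBilin_lamB (hh : IsBilin h) : IsBilin (lamB h) := by
  refine ⟨fun y => ⟨fun u v => ?_, fun c u => ?_⟩, fun x => ⟨fun u v => ?_, fun c u => ?_⟩⟩ <;>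
  simp only [lamB, hh.add_left, hh.add_right, hh.smul_left, hh.smul_right] <;> ring

lemma IsMulti4.add (hF : IsMulti4 F) (hG : IsMulti4 G) : IsMulti4 (F + G) :=
  ⟨fun y z w => (hF.1 y z w).add (hG.1 y z w), fun x z w => (hF.2.1 x z w).add (hG.2.1 x z w),
    fun x y w => (hF.2.2.1 x y w).add (hG.2.2.1 x y w),
    fun x y z => (hF.2.2.2 x y z).add (hG.2.2.2 x y z)⟩

lemma IsMulti4.smul (hF : IsMulti4 F) (c : ℝ) : IsMulti4 (c • F) :=
  ⟨fun y z w => (hF.1 y z w).const_mul c, fun x z w => (hF.2.1 x z w).const_mul c,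
    fun x y w => (hF.2.2.1 x y w).const_mul c, fun x y z => (hF.2.2.2 x y z).const_mul c⟩

lemma isMulti4_wedge (t : ℝ) (hh : IsBilin h) (hk : IsBilin k) : IsMulti4 (wedge t h k) := by
  refine ⟨fun y z w => ⟨fun u v => ?_, fun c u => ?_⟩, fun x z w => ⟨fun u v => ?_, fun c u => ?_⟩,
    fun x y w => ⟨fun u v => ?_, fun c u => ?_⟩, fun x y z => ⟨fun u v => ?_, fun c u => ?_⟩⟩ <;>
  simp only [wedge, hh.add_left, hh.add_right, hh.smul_left, hh.smul_right, hk.add_left,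
    hk.add_right, hk.smul_left, hk.smul_right] <;> ring

lemma isMulti4_prodB (hh : IsBilin h) (hk : IsBilin k) : IsMulti4 (prodB h k) := by
  refine ⟨fun y z w => ⟨fun u v => ?_, fun c u => ?_⟩, fun x z w => ⟨fun u v => ?_, fun c u => ?_⟩,
    fun x y w => ⟨fun u v => ?_, fun c u => ?_⟩, fun x y z => ⟨fun u v => ?_, fun c u => ?_⟩⟩ <;>
  simp only [prodB, hh.add_left, hh.add_right, hh.smul_left, hh.smul_right, hk.add_left,
    hk.add_right, hk.smul_left, hk.smul_right] <;> ring

variable (V) in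
def bilinForms : Submodule ℝ (V → V → ℝ) where
  carrier := {h | IsBilin h}
  add_mem' hh hk := ⟨fun y => (hh.1 y).add (hk.1 y), fun x => (hh.2 x).add (hk.2 x)⟩
  zero_mem' := ⟨fun _ => ⟨fun _ _ => by simp, fun _ _ => by simp⟩,
    fun _ => ⟨fun _ _ => by simp, fun _ _ => by simp⟩⟩
  smul_mem' c _ hh := ⟨fun y => (hh.1 y).const_mul c, fun x => (hh.2 x).const_mul c⟩

structure IsMetric (g : V → V → ℝ) : Prop where
  bilin : IsBilin g
  symm : ∀ x y, g x y = g y x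
  nondeg : ∀ x, (∀ y, g x y = 0) → x = 0

end Linearity

section Gram

variable {V : Type*} [AddCommGroup V] [Module ℝ V] {n : ℕ} {b : Module.Basis (Fin n) ℝ V}
  {g : V → V → ℝ}

open scoped Matrix

lemma det_gram_ne_zero (hg : IsMetric g) : (Matrix.of fun i j => g (b i) (b j)).det ≠ 0 := by
  let B : LinearMap.BilinForm ℝ V :=
    LinearMap.mk₂ ℝ g hg.bilin.add_left hg.bilin.smul_left hg.bilin.add_right hg.bilin.smul_right
  have hB : B.Nondegenerate :=
    ⟨hg.nondeg, fun y hy => hg.nondeg y fun x => hg.symm y x ▸ hy x⟩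
  convert (LinearMap.BilinForm.nondegenerate_iff_det_ne_zero b).1 hB using 2
  ext i j
  simp [B, LinearMap.BilinForm.toMatrix_apply]

lemma ginv_symm (hg : IsMetric g) (i j : Fin n) : ginv n b g i j = ginv n b g j i := by
  have hG : (Matrix.of fun i j => g (b i) (b j))ᵀ = Matrix.of fun i j => g (b i) (b j) := by
    ext i j; exact hg.symm _ _
  have h : (ginv n b g)ᵀ = ginv n b g := by rw [ginv, Matrix.transpose_nonsing_inv, hG]
  exact (congrFun (congrFun h i) j).symm

lemma sum_ginv_mul_eq_repr (hg : IsMetric g) (x : V) (i : Fin n) :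
    ∑ j, ginv n b g i j * g x (b j) = b.repr x i := by
  have hx : (fun j => g x (b j)) = (Matrix.of fun i j => g (b i) (b j)) *ᵥ b.repr x := by
    funext j
    rw [hg.symm, Matrix.mulVec, dotProduct, ← (hg.bilin.2 (b j)).sum_repr_mul b x]
    simp [mul_comm]
  calc ∑ j, ginv n b g i j * g x (b j) = (ginv n b g *ᵥ fun j => g x (b j)) i := rfl
    _ = b.repr x i := by
      rw [hx, Matrix.mulVec_mulVec, ginv,
        Matrix.nonsing_inv_mul _ (Ne.isUnit (det_gram_ne_zero hg)), Matrix.one_mulVec]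

lemma contract_apply_mul_g (hg : IsMetric g) {f : V → ℝ} (hf : IsLin f) (x : V) :
    ∑ i, ∑ j, ginv n b g i j * (f (b i) * g x (b j)) = f x := by
  simp_rw [mul_left_comm _ (f _), ← Finset.mul_sum, sum_ginv_mul_eq_repr hg, mul_comm (f _)]
  exact hf.sum_repr_mul b x

lemma contract_g_mul_apply (hg : IsMetric g) {f : V → ℝ} (hf : IsLin f) (x : V) :
    ∑ i, ∑ j, ginv n b g i j * (g x (b i) * f (b j)) = f x := by
  rw [Finset.sum_comm, ← contract_apply_mul_g (b := b) hg hf x]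
  simp_rw [ginv_symm hg _ _, mul_comm (g _ _)]

lemma trg_self (hg : IsMetric g) : trg n b g g = n := by
  simp_rw [trg, sum_ginv_mul_eq_repr hg, b.repr_self, Finsupp.single_eq_same]
  simp

end Gram

section Traces

variable {V : Type*} [AddCommGroup V] [Module ℝ V]

@[simps]
noncomputable def trgₗ (n : ℕ) (b : Module.Basis (Fin n) ℝ V) (g : V → V → ℝ) :
    (V → V → ℝ) →ₗ[ℝ] ℝ where
  toFun := trg n b g
  map_add' h k := by simp only [trg, Pi.add_apply, mul_add, Finset.sum_add_distrib]
  map_smul' c h := by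
    simp only [trg, Pi.smul_apply, smul_eq_mul, RingHom.id_apply, Finset.mul_sum, mul_left_comm]

noncomputable def ricₗ (n : ℕ) (b : Module.Basis (Fin n) ℝ V) (g : V → V → ℝ) :
    (V → V → V → V → ℝ) →ₗ[ℝ] (V → V → ℝ) where
  toFun := Ric n b g
  map_add' F G := by funext x y; simp only [Ric, Pi.add_apply, mul_add, Finset.sum_add_distrib]
  map_smul' c F := by
    funext x y
    simp only [Ric, Pi.smul_apply, smul_eq_mul, RingHom.id_apply, Finset.mul_sum, mul_left_comm]

noncomputable def ricSₗ (n : ℕ) (b : Module.Basis (Fin n) ℝ V) (g : V → V → ℝ) :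
    (V → V → V → V → ℝ) →ₗ[ℝ] (V → V → ℝ) where
  toFun := RicS n b g
  map_add' F G := by funext x y; simp only [RicS, Pi.add_apply, mul_add, Finset.sum_add_distrib]
  map_smul' c F := by
    funext x y
    simp only [RicS, Pi.smul_apply, smul_eq_mul, RingHom.id_apply, Finset.mul_sum, mul_left_comm]

noncomputable def symTraceless (n : ℕ) (b : Module.Basis (Fin n) ℝ V) (g : V → V → ℝ) :
    Submodule ℝ (V → V → ℝ) :=
  bilinForms V ⊓ symmForms V ⊓ LinearMap.ker (trgₗ n b g)

variable (V) in
def skewBilin : Submodule ℝ (V → V → ℝ) := bilinForms V ⊓ skewForms V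

variable {n : ℕ} {b : Module.Basis (Fin n) ℝ V} {g h : V → V → ℝ} {F : V → V → V → V → ℝ}

lemma ricₗ_apply : ricₗ n b g F = Ric n b g F := rfl

lemma ricSₗ_apply : ricSₗ n b g F = RicS n b g F := rfl

lemma trg_swap (hg : IsMetric g) : trg n b g (fun x y => h y x) = trg n b g h := by
  rw [trg, Finset.sum_comm]
  simp_rw [ginv_symm hg]
  rfl

lemma trg_eq_zero_of_mem_skewForms (hg : IsMetric g) (hh : h ∈ skewForms V) :
    trg n b g h = 0 := by
  have := trg_swap (n := n) (b := b) hg (h := h)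
  rw [swap_eq_neg_of_mem_skewForms hh, ← trgₗ_apply, map_neg, trgₗ_apply] at this
  linarith

lemma trg_symB (hg : IsMetric g) : trg n b g (symB h) = trg n b g h := by
  have : symB h = (1 / 2 : ℝ) • (h + fun x y => h y x) := by
    funext x y; simp only [symB, Pi.smul_apply, Pi.add_apply, smul_eq_mul]; ring
  rw [this, ← trgₗ_apply, map_smul, map_add, trgₗ_apply, trgₗ_apply, trg_swap hg, smul_eq_mul]
  ring

lemma trg_Ric : trg n b g (Ric n b g F) = tau n b g F := by
  have h1 : trg n b g (Ric n b g F)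
      = ∑ k, ∑ i, ∑ l, ∑ j, ginv n b g k l * (ginv n b g i j * F (b i) (b k) (b l) (b j)) := by
    simp only [trg, Ric, Finset.mul_sum]
    exact Finset.sum_congr rfl fun k _ => Finset.sum_comm
  rw [h1, Finset.sum_comm]
  exact Finset.sum_congr rfl fun i _ => Finset.sum_congr rfl fun k _ =>
    Finset.sum_congr rfl fun l _ => Finset.sum_congr rfl fun j _ => by ring

lemma trg_RicS : trg n b g (RicS n b g F) = tau n b g F := by
  have h1 : trg n b g (RicS n b g F)
      = ∑ k, ∑ i, ∑ j, ∑ l, ginv n b g k l * (ginv n b g i j * F (b k) (b i) (b j) (b l)) := by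
    simp only [trg, RicS, Finset.mul_sum]
    refine Finset.sum_congr rfl fun k _ => ?_
    rw [Finset.sum_comm]
    exact Finset.sum_congr rfl fun i _ => Finset.sum_comm
  rw [h1]
  exact Finset.sum_congr rfl fun i _ => Finset.sum_congr rfl fun j _ =>
    Finset.sum_congr rfl fun k _ => Finset.sum_congr rfl fun l _ => by ring

lemma isBilin_Ric (hF : IsMulti4 F) : IsBilin (Ric n b g F) :=
  ⟨fun _ => IsLin.sum _ fun _ => IsLin.sum _ fun _ => (hF.2.1 _ _ _).const_mul _,
    fun _ => IsLin.sum _ fun _ => IsLin.sum _ fun _ => (hF.2.2.1 _ _ _).const_mul _⟩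

lemma isBilin_RicS (hF : IsMulti4 F) : IsBilin (RicS n b g F) :=
  ⟨fun _ => IsLin.sum _ fun _ => IsLin.sum _ fun _ => (hF.1 _ _ _).const_mul _,
    fun _ => IsLin.sum _ fun _ => IsLin.sum _ fun _ => (hF.2.2.2 _ _ _).const_mul _⟩

lemma symB_mem_bilinForms_inf_symmForms (hh : IsBilin h) : symB h ∈ bilinForms V ⊓ symmForms V :=
  ⟨isBilin_symB hh, fun x y => by simp only [symB]; ring⟩

lemma lamB_mem_skewBilin (hh : IsBilin h) : lamB h ∈ skewBilin V :=
  ⟨isBilin_lamB hh, fun x y => by simp only [lamB]; ring⟩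

lemma symCombo_mem_symTraceless (hg : IsMetric g) (hF : IsMulti4 F) {c₀ c₁ c₂ : ℝ}
    (hc : c₀ * n + (c₁ + c₂) * tau n b g F = 0) :
    c₀ • g + c₁ • symB (Ric n b g F) + c₂ • symB (RicS n b g F) ∈ symTraceless n b g := by
  rw [symTraceless, Submodule.mem_inf, LinearMap.mem_ker]
  refine ⟨add_mem (add_mem (Submodule.smul_mem _ _ ⟨hg.bilin, hg.symm⟩)
    (Submodule.smul_mem _ _ (symB_mem_bilinForms_inf_symmForms (isBilin_Ric hF))))
    (Submodule.smul_mem _ _ (symB_mem_bilinForms_inf_symmForms (isBilin_RicS hF))), ?_⟩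
  simp only [map_add, map_smul, trgₗ_apply, trg_self hg, trg_symB hg, trg_Ric,
    trg_RicS, smul_eq_mul]
  linarith

lemma skewCombo_mem_skewBilin (hF : IsMulti4 F) (c₁ c₂ : ℝ) :
    c₁ • lamB (Ric n b g F) + c₂ • lamB (RicS n b g F) ∈ skewBilin V :=
  add_mem (Submodule.smul_mem _ _ (lamB_mem_skewBilin (isBilin_Ric hF)))
    (Submodule.smul_mem _ _ (lamB_mem_skewBilin (isBilin_RicS hF)))

end Traces

section Contractions

variable {V : Type*} [AddCommGroup V] [Module ℝ V] {n : ℕ} {b : Module.Basis (Fin n) ℝ V}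
  {g h : V → V → ℝ}

lemma Ric_wedgeₗ (hg : IsMetric g) (hh : IsBilin h) :
    Ric n b g (wedgeₗ g h) = (1 - n : ℝ) • h := by
  funext x y
  have e := contract_apply_mul_g (b := b) hg (hh.1 y) x
  calc Ric n b g (wedgeₗ g h) x y
      = ∑ i, ∑ j, ginv n b g i j * (h (b i) y * g x (b j)) - h x y * trg n b g g := by
        simp only [Ric, wedgeₗ_apply, wedge, trg, Finset.mul_sum, ← Finset.sum_sub_distrib]
        exact Finset.sum_congr rfl fun i _ => Finset.sum_congr rfl fun j _ => by ring
    _ = ((1 - n : ℝ) • h) x y := by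
        rw [e, trg_self hg]; simp only [Pi.smul_apply, smul_eq_mul]; ring

lemma Ric_crossₗ (hg : IsMetric g) (hh : IsBilin h) :
    Ric n b g (crossₗ g h) = h - trg n b g h • g := by
  funext x y
  have e := contract_g_mul_apply (b := b) hg (hh.2 x) y
  calc Ric n b g (crossₗ g h) x y
      = ∑ i, ∑ j, ginv n b g i j * (g y (b i) * h x (b j)) - g x y * trg n b g h := by
        simp only [Ric, crossₗ_apply, trg, Finset.mul_sum, ← Finset.sum_sub_distrib]
        refine Finset.sum_congr rfl fun i _ => Finset.sum_congr rfl fun j _ => ?_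
        rw [hg.symm (b i) y]; ring
    _ = (h - trg n b g h • g) x y := by
        rw [e]; simp only [Pi.sub_apply, Pi.smul_apply, smul_eq_mul]; ring

lemma Ric_prodₗ (hg : IsMetric g) (hh : IsBilin h) :
    Ric n b g (prodₗ g h) = fun x y => h y x := by
  funext x y
  exact contract_apply_mul_g hg (hh.1 x) y

lemma RicS_wedgeₗ (hg : IsMetric g) (hh : IsBilin h) :
    RicS n b g (wedgeₗ g h) = h - trg n b g h • g := by
  funext x y
  have e := contract_g_mul_apply (b := b) hg (hh.2 x) y
  calc RicS n b g (wedgeₗ g h) x y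
      = ∑ i, ∑ j, ginv n b g i j * (g y (b i) * h x (b j)) - g x y * trg n b g h := by
        simp only [RicS, wedgeₗ_apply, wedge, trg, Finset.mul_sum, ← Finset.sum_sub_distrib]
        refine Finset.sum_congr rfl fun i _ => Finset.sum_congr rfl fun j _ => ?_
        rw [hg.symm (b i) y]; ring
    _ = (h - trg n b g h • g) x y := by
        rw [e]; simp only [Pi.sub_apply, Pi.smul_apply, smul_eq_mul]; ring

lemma RicS_crossₗ (hg : IsMetric g) (hh : IsBilin h) :
    RicS n b g (crossₗ g h) = (1 - n : ℝ) • h := by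
  funext x y
  have e := contract_apply_mul_g (b := b) hg (hh.1 y) x
  calc RicS n b g (crossₗ g h) x y
      = ∑ i, ∑ j, ginv n b g i j * (h (b i) y * g x (b j)) - h x y * trg n b g g := by
        simp only [RicS, crossₗ_apply, trg, Finset.mul_sum, ← Finset.sum_sub_distrib]
        exact Finset.sum_congr rfl fun i _ => Finset.sum_congr rfl fun j _ => by ring
    _ = ((1 - n : ℝ) • h) x y := by
        rw [e, trg_self hg]; simp only [Pi.smul_apply, smul_eq_mul]; ring

lemma RicS_prodₗ (hg : IsMetric g) (hh : IsBilin h) : RicS n b g (prodₗ g h) = h := by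
  funext x y
  rw [← contract_apply_mul_g (b := b) hg (hh.2 x) y]
  simp only [RicS, prodₗ_apply, prodB, hg.symm _ y]

end Contractions

section Sectors

variable {V : Type*} [AddCommGroup V] [Module ℝ V] {n : ℕ} {b : Module.Basis (Fin n) ℝ V}
  {g p : V → V → ℝ}

lemma trg_eq_zero_of_mem_symTraceless (hp : p ∈ symTraceless n b g) : trg n b g p = 0 := hp.2

lemma Ric_symPencil (hg : IsMetric g) (hp : p ∈ symTraceless n b g) (t : ℝ) :
    Ric n b g (symPencil g t p) = (1 - n + t : ℝ) • p := by
  change ricₗ n b g _ = _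
  simp only [symPencil, LinearMap.add_apply, LinearMap.smul_apply, map_add, map_smul, ricₗ_apply,
    Ric_wedgeₗ hg hp.1.1, Ric_crossₗ hg hp.1.1, trg_eq_zero_of_mem_symTraceless hp, zero_smul,
    sub_zero]
  module

lemma RicS_symPencil (hg : IsMetric g) (hp : p ∈ symTraceless n b g) (t : ℝ) :
    RicS n b g (symPencil g t p) = (1 + t * (1 - n) : ℝ) • p := by
  change ricSₗ n b g _ = _
  simp only [symPencil, LinearMap.add_apply, LinearMap.smul_apply, map_add, map_smul,
    ricSₗ_apply, RicS_wedgeₗ hg hp.1.1, RicS_crossₗ hg hp.1.1,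
    trg_eq_zero_of_mem_symTraceless hp, zero_smul, sub_zero]
  module

lemma tau_symPencil (hg : IsMetric g) (hp : p ∈ symTraceless n b g) (t : ℝ) :
    tau n b g (symPencil g t p) = 0 := by
  rw [← trg_Ric, Ric_symPencil hg hp, ← trgₗ_apply, map_smul, trgₗ_apply,
    trg_eq_zero_of_mem_symTraceless hp, smul_zero]

lemma Ric_skewPencil (hg : IsMetric g) (hp : p ∈ skewBilin V) (t : ℝ) :
    Ric n b g (skewPencil g t p) = (t - 1 - n : ℝ) • p := by
  change ricₗ n b g _ = _
  simp only [skewPencil, LinearMap.add_apply, LinearMap.smul_apply, map_add, map_smul, ricₗ_apply,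
    Ric_prodₗ hg hp.1, Ric_wedgeₗ hg hp.1, Ric_crossₗ hg hp.1, swap_eq_neg_of_mem_skewForms hp.2,
    trg_eq_zero_of_mem_skewForms hg hp.2, zero_smul, sub_zero]
  module

lemma RicS_skewPencil (hg : IsMetric g) (hp : p ∈ skewBilin V) (t : ℝ) :
    RicS n b g (skewPencil g t p) = (3 + t * (1 - n) : ℝ) • p := by
  change ricSₗ n b g _ = _
  simp only [skewPencil, LinearMap.add_apply, LinearMap.smul_apply, map_add, map_smul,
    ricSₗ_apply, RicS_prodₗ hg hp.1, RicS_wedgeₗ hg hp.1, RicS_crossₗ hg hp.1,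
    trg_eq_zero_of_mem_skewForms hg hp.2, zero_smul, sub_zero]
  module

lemma symPencil_mem_rSet (hg : IsMetric g) (hp : p ∈ bilinForms V ⊓ symmForms V) (t : ℝ) :
    symPencil g t p ∈ rSet V := by
  obtain ⟨hpb, hps⟩ := hp
  rw [symPencil_apply]
  refine ⟨isMulti4_wedge t hpb hg.bilin, fun x y z w => ?_, fun x y z w => ?_⟩
  · simp only [wedge]; ring
  · simp only [wedge]
    rw [hps y x, hps z x, hps z y, hg.symm z x, hg.symm y x, hg.symm z y]
    ring

lemma skewPencil_mem_rSet (hg : IsMetric g) (hp : p ∈ skewBilin V) (t : ℝ) :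
    skewPencil g t p ∈ rSet V := by
  obtain ⟨hpb, hps⟩ := hp
  rw [skewPencil_apply]
  refine ⟨((isMulti4_prodB hpb hg.bilin).smul 2).add (isMulti4_wedge t hpb hg.bilin),
    fun x y z w => ?_, fun x y z w => ?_⟩
  · simp only [wedge, prodB, Pi.add_apply, Pi.smul_apply, smul_eq_mul]
    rw [hps y x]; ring
  · simp only [wedge, prodB, Pi.add_apply, Pi.smul_apply, smul_eq_mul]
    rw [hps y x, hps z x, hps z y, hg.symm z x, hg.symm y x, hg.symm z y]
    ring

lemma symPencil_injOn (hg : IsMetric g) (hn : 3 ≤ n) {r q : V → V → ℝ}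
    (hr : r ∈ symTraceless n b g) (hq : q ∈ symTraceless n b g)
    (h : symPencil g 0 r + crossₗ g q = 0) : r = 0 ∧ q = 0 := by
  have hn' : (3 : ℝ) ≤ n := by exact_mod_cast hn
  refine injOn_of_det (ρ := ricₗ n b g) (σ := ricSₗ n b g) (a₁ := 1 - n + 0) (b₁ := 1)
    (a₂ := 1 + 0 * (1 - n)) (b₂ := 1 - n) (ne_of_gt (by nlinarith))
    (fun r hr => Ric_symPencil hg hr 0) (fun r hr => ?_) (fun r hr => RicS_symPencil hg hr 0)
    (fun r hr => RicS_crossₗ hg hr.1.1) hr hq h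
  rw [ricₗ_apply, Ric_crossₗ hg hr.1.1, trg_eq_zero_of_mem_symTraceless hr, zero_smul, sub_zero,
    one_smul]

lemma skewPencil_injOn (hg : IsMetric g) (b : Module.Basis (Fin n) ℝ V) (hn : 3 ≤ n)
    {r q : V → V → ℝ} (hr : r ∈ skewBilin V) (hq : q ∈ skewBilin V)
    (h : skewPencil g 0 r + crossₗ g q = 0) : r = 0 ∧ q = 0 := by
  have hn' : (3 : ℝ) ≤ n := by exact_mod_cast hn
  refine injOn_of_det (ρ := ricₗ n b g) (σ := ricSₗ n b g) (a₁ := 0 - 1 - n) (b₁ := 1)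
    (a₂ := 3 + 0 * (1 - n)) (b₂ := 1 - n) (ne_of_gt (by nlinarith))
    (fun r hr => Ric_skewPencil hg hr 0) (fun r hr => ?_) (fun r hr => RicS_skewPencil hg hr 0)
    (fun r hr => RicS_crossₗ hg hr.1) hr hq h
  rw [ricₗ_apply, Ric_crossₗ hg hr.1, trg_eq_zero_of_mem_skewForms hg hr.2, zero_smul, sub_zero,
    one_smul]

end Sectors

section Projections

variable {V : Type*} [AddCommGroup V] [Module ℝ V] {n : ℕ} {b : Module.Basis (Fin n) ℝ V}
  {g : V → V → ℝ}

lemma image_eq_image_of_retract {α β : Type*} {π : α → α} {S : Set α} {f : β → α} {P : Set β}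
    (hπ : ∀ x ∈ S, ∃ p ∈ P, f p = π x) (hfS : ∀ p ∈ P, f p ∈ S)
    (hfix : ∀ p ∈ P, π (f p) = f p) : π '' S = f '' P := by
  refine Set.Subset.antisymm ?_ ?_
  · rintro _ ⟨x, hx, rfl⟩
    exact hπ x hx
  · rintro _ ⟨p, hp, rfl⟩
    exact ⟨f p, hfS p hp, hfix p hp⟩

lemma cast_ne_zero_of_three_le (hn : 3 ≤ n) :
    (n : ℝ) ≠ 0 ∧ (n : ℝ) - 1 ≠ 0 ∧ (n : ℝ) - 2 ≠ 0 ∧ (n : ℝ) + 1 ≠ 0 ∧ (n : ℝ) + 2 ≠ 0 ∧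
      (n : ℝ) ^ 2 - 4 ≠ 0 := by
  have h : (3 : ℝ) ≤ n := by exact_mod_cast hn
  refine ⟨?_, ?_, ?_, ?_, ?_, ?_⟩ <;> apply ne_of_gt <;> nlinarith

lemma image_pi2 (hg : IsMetric g) (hn : 3 ≤ n) :
    pi2 n b g '' rSet V = symPencil g 0 '' symTraceless n b g := by
  obtain ⟨h₀, h₁, -, -, -, -⟩ := cast_ne_zero_of_three_le hn
  refine image_eq_image_of_retract (fun F hF => ⟨_, symCombo_mem_symTraceless hg hF.1
    (c₀ := tau n b g F / (n * (n - 1))) (c₁ := -1 / (n - 1)) (c₂ := 0) (by field_simp; ring), ?_⟩)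
    (fun p hp => symPencil_mem_rSet hg hp.1 0) (fun p hp => ?_)
  · funext x y z w
    simp only [symPencil_apply, pi2, wedge, symB, Pi.add_apply, Pi.sub_apply, Pi.smul_apply,
      smul_eq_mul]
    field_simp
    ring
  · rw [pi2, tau_symPencil hg hp, Ric_symPencil hg hp, symPencil_apply]
    funext x y z w
    simp only [wedge, symB, Pi.sub_apply, Pi.smul_apply, smul_eq_mul, hp.1.2 z x, hp.1.2 z y,
      hp.1.2 w x, hp.1.2 w y]
    field_simp
    ring

lemma image_pi5 (hg : IsMetric g) (hn : 3 ≤ n) :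
    pi5 n b g '' rSet V = symPencil g ((n : ℝ) - 1) '' symTraceless n b g := by
  obtain ⟨h₀, h₁, h₂, -, -, -⟩ := cast_ne_zero_of_three_le hn
  refine image_eq_image_of_retract (fun F hF => ⟨_, symCombo_mem_symTraceless hg hF.1
    (c₀ := tau n b g F / (n * (n - 1) * (n - 2))) (c₁ := -1 / (n * (n - 1) * (n - 2)))
    (c₂ := -1 / (n * (n - 2))) (by field_simp; ring), ?_⟩)
    (fun p hp => symPencil_mem_rSet hg hp.1 _) (fun p hp => ?_)
  · funext x y z w
    simp only [symPencil_apply, pi5, wedge, symB, Pi.add_apply, Pi.sub_apply, Pi.smul_apply,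
      smul_eq_mul]
    field_simp
    ring
  · rw [pi5, tau_symPencil hg hp, Ric_symPencil hg hp, RicS_symPencil hg hp, symPencil_apply]
    funext x y z w
    simp only [wedge, symB, Pi.add_apply, Pi.sub_apply, Pi.smul_apply, smul_eq_mul, hp.1.2 z x,
      hp.1.2 z y, hp.1.2 w x, hp.1.2 w y]
    field_simp
    ring

lemma image_al2 (hg : IsMetric g) (hn : 3 ≤ n) :
    al2 n b g '' rSet V = symPencil g 1 '' symTraceless n b g := by
  obtain ⟨h₀, -, h₂, -, -, -⟩ := cast_ne_zero_of_three_le hn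
  refine image_eq_image_of_retract (fun F hF => ⟨_, symCombo_mem_symTraceless hg hF.1
    (c₀ := tau n b g F / (n * (n - 2))) (c₁ := -1 / (2 * (n - 2))) (c₂ := -1 / (2 * (n - 2)))
    (by field_simp; ring), ?_⟩)
    (fun p hp => symPencil_mem_rSet hg hp.1 1) (fun p hp => ?_)
  · funext x y z w
    simp only [symPencil_apply, al2, wedge, symB, Pi.add_apply, Pi.smul_apply, smul_eq_mul]
    field_simp
    ring
  · rw [al2, tau_symPencil hg hp, Ric_symPencil hg hp, RicS_symPencil hg hp, symPencil_apply]
    funext x y z w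
    simp only [wedge, symB, Pi.add_apply, Pi.smul_apply, smul_eq_mul, hp.1.2 z x, hp.1.2 z y,
      hp.1.2 w x, hp.1.2 w y]
    field_simp
    ring

lemma image_al3 (hg : IsMetric g) (hn : 3 ≤ n) :
    al3 n b g '' rSet V = symPencil g (-1) '' symTraceless n b g := by
  obtain ⟨h₀, -, -, -, -, -⟩ := cast_ne_zero_of_three_le hn
  refine image_eq_image_of_retract (fun F hF => ⟨_, symCombo_mem_symTraceless hg hF.1
    (c₀ := 0) (c₁ := -1 / (2 * n)) (c₂ := 1 / (2 * n)) (by ring), ?_⟩)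
    (fun p hp => symPencil_mem_rSet hg hp.1 (-1)) (fun p hp => ?_)
  · funext x y z w
    simp only [symPencil_apply, al3, wedge, symB, Pi.add_apply, Pi.sub_apply, Pi.smul_apply,
      smul_eq_mul]
    field_simp
    ring
  · rw [al3, Ric_symPencil hg hp, RicS_symPencil hg hp, symPencil_apply]
    funext x y z w
    simp only [wedge, symB, Pi.sub_apply, Pi.smul_apply, smul_eq_mul, hp.1.2 z x,
      hp.1.2 z y, hp.1.2 w x, hp.1.2 w y]
    field_simp
    ring

lemma image_pi3 (hg : IsMetric g) (hn : 3 ≤ n) :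
    pi3 n b g '' rSet V = skewPencil g 0 '' skewBilin V := by
  obtain ⟨-, -, -, h₁, -, -⟩ := cast_ne_zero_of_three_le hn
  refine image_eq_image_of_retract (fun F hF => ⟨_, skewCombo_mem_skewBilin (b := b) (g := g) hF.1
    (-1 / (n + 1)) 0, ?_⟩) (fun p hp => skewPencil_mem_rSet hg hp 0) (fun p hp => ?_)
  · funext x y z w
    simp only [skewPencil_apply, pi3, wedge, prodB, lamB, Pi.add_apply, Pi.smul_apply,
      smul_eq_mul]
    field_simp
    ring
  · rw [pi3, Ric_skewPencil hg hp, skewPencil_apply]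
    funext x y z w
    simp only [wedge, prodB, lamB, Pi.add_apply, Pi.smul_apply, smul_eq_mul, hp.2 y x, hp.2 z x,
      hp.2 z y, hp.2 w x, hp.2 w y]
    field_simp
    ring

lemma image_pi4 (hg : IsMetric g) (hn : 3 ≤ n) :
    pi4 n b g '' rSet V = skewPencil g ((n : ℝ) + 1) '' skewBilin V := by
  obtain ⟨-, -, -, h₁, -, h₄⟩ := cast_ne_zero_of_three_le hn
  refine image_eq_image_of_retract (fun F hF => ⟨_, skewCombo_mem_skewBilin (b := b) (g := g) hF.1
    (-3 / ((n ^ 2 - 4) * (n + 1))) (-1 / (n ^ 2 - 4)), ?_⟩)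
    (fun p hp => skewPencil_mem_rSet hg hp _) (fun p hp => ?_)
  · funext x y z w
    simp only [skewPencil_apply, pi4, wedge, prodB, lamB, Pi.add_apply, Pi.sub_apply,
      Pi.smul_apply, smul_eq_mul]
    field_simp
    ring
  · rw [pi4, Ric_skewPencil hg hp, RicS_skewPencil hg hp, skewPencil_apply]
    funext x y z w
    simp only [wedge, prodB, lamB, Pi.add_apply, Pi.sub_apply, Pi.smul_apply, smul_eq_mul,
      hp.2 y x, hp.2 z x, hp.2 z y, hp.2 w x, hp.2 w y]
    field_simp
    ring

lemma image_al4 (hg : IsMetric g) (hn : 3 ≤ n) :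
    al4 n b g '' rSet V = skewPencil g (-1) '' skewBilin V := by
  obtain ⟨-, -, -, -, h₂, -⟩ := cast_ne_zero_of_three_le hn
  refine image_eq_image_of_retract (fun F hF => ⟨_, skewCombo_mem_skewBilin (b := b) (g := g) hF.1
    (-3 / (4 * (n + 2))) (1 / (4 * (n + 2))), ?_⟩)
    (fun p hp => skewPencil_mem_rSet hg hp (-1)) (fun p hp => ?_)
  · funext x y z w
    simp only [skewPencil_apply, al4, wedge, prodB, lamB, Pi.add_apply, Pi.sub_apply,
      Pi.smul_apply, smul_eq_mul]
    field_simp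
    ring
  · rw [al4, Ric_skewPencil hg hp, RicS_skewPencil hg hp, skewPencil_apply]
    funext x y z w
    simp only [wedge, prodB, lamB, Pi.add_apply, Pi.sub_apply, Pi.smul_apply, smul_eq_mul,
      hp.2 y x, hp.2 z x, hp.2 z y, hp.2 w x, hp.2 w y]
    field_simp
    ring

lemma image_al5 (hg : IsMetric g) (hn : 3 ≤ n) :
    al5 n b g '' rSet V = skewPencil g 3 '' skewBilin V := by
  obtain ⟨-, -, h₂, -, -, -⟩ := cast_ne_zero_of_three_le hn
  refine image_eq_image_of_retract (fun F hF => ⟨_, skewCombo_mem_skewBilin (b := b) (g := g) hF.1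
    (-1 / (4 * (n - 2))) (-1 / (4 * (n - 2))), ?_⟩)
    (fun p hp => skewPencil_mem_rSet hg hp 3) (fun p hp => ?_)
  · funext x y z w
    simp only [skewPencil_apply, al5, wedge, prodB, lamB, Pi.add_apply, Pi.smul_apply,
      smul_eq_mul]
    field_simp
    ring
  · rw [al5, Ric_skewPencil hg hp, RicS_skewPencil hg hp, skewPencil_apply]
    funext x y z w
    simp only [wedge, prodB, lamB, Pi.add_apply, Pi.smul_apply, smul_eq_mul,
      hp.2 y x, hp.2 z x, hp.2 z y, hp.2 w x, hp.2 w y]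
    field_simp
    ring

lemma al6_eq_pi6 (hn : 3 ≤ n) : al6 n b g = pi6 n b g := by
  obtain ⟨h₀, h₁, h₂, -, -, -⟩ := cast_ne_zero_of_three_le hn
  funext F x y z w
  simp only [al6, pi6, al1, al2, wedge, Pi.add_apply, Pi.sub_apply, Pi.smul_apply, smul_eq_mul]
  field_simp
  ring

lemma al7_eq_pi7 : al7 n b g = pi7 n b g := by
  funext F x y z w
  simp only [al7, pi7, al3, al4, Pi.add_apply, Pi.sub_apply, Pi.smul_apply, smul_eq_mul,
    div_eq_mul_inv, mul_inv]
  ring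

lemma al8_eq_pi8 : al8 n b g = pi8 n b g := by
  funext F x y z w
  simp only [al8, pi8, al5, Pi.add_apply, Pi.sub_apply, Pi.smul_apply, smul_eq_mul,
    div_eq_mul_inv, mul_inv]
  ring

end Projections

theorem stmt17 {V : Type*} [AddCommGroup V] [Module ℝ V]
    (n : ℕ) (hn : 3 ≤ n) (b : Module.Basis (Fin n) ℝ V)
    (g : V → V → ℝ) (hgb : IsBilin g) (hgs : ∀ x y, g x y = g y x)
    (hgnd : ∀ x : V, (∀ y : V, g x y = 0) → x = 0) :
    al1 n b g '' rSet V = pi1 n b g '' rSet V ∧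
    (pi2 n b g '' rSet V) + (pi5 n b g '' rSet V)
      = (al2 n b g '' rSet V) + (al3 n b g '' rSet V) ∧
    (∀ u ∈ pi2 n b g '' rSet V, ∀ v ∈ pi5 n b g '' rSet V,
      ∀ u' ∈ pi2 n b g '' rSet V, ∀ v' ∈ pi5 n b g '' rSet V,
        u + v = u' + v' → u = u' ∧ v = v') ∧
    (∀ u ∈ al2 n b g '' rSet V, ∀ v ∈ al3 n b g '' rSet V,
      ∀ u' ∈ al2 n b g '' rSet V, ∀ v' ∈ al3 n b g '' rSet V,
        u + v = u' + v' → u = u' ∧ v = v') ∧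
    (pi3 n b g '' rSet V) + (pi4 n b g '' rSet V)
      = (al4 n b g '' rSet V) + (al5 n b g '' rSet V) ∧
    (∀ u ∈ pi3 n b g '' rSet V, ∀ v ∈ pi4 n b g '' rSet V,
      ∀ u' ∈ pi3 n b g '' rSet V, ∀ v' ∈ pi4 n b g '' rSet V,
        u + v = u' + v' → u = u' ∧ v = v') ∧
    (∀ u ∈ al4 n b g '' rSet V, ∀ v ∈ al5 n b g '' rSet V,
      ∀ u' ∈ al4 n b g '' rSet V, ∀ v' ∈ al5 n b g '' rSet V,
        u + v = u' + v' → u = u' ∧ v = v') ∧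
    al6 n b g '' rSet V = pi6 n b g '' rSet V ∧
    al7 n b g '' rSet V = pi7 n b g '' rSet V ∧
    al8 n b g '' rSet V = pi8 n b g '' rSet V := by
  have hg : IsMetric g := ⟨hgb, hgs, hgnd⟩
  have hn' : (3 : ℝ) ≤ n := by exact_mod_cast hn
  have h₂₅ : (0 : ℝ) ≠ n - 1 := by linarith
  have h₃₄ : (0 : ℝ) ≠ n + 1 := by linarith
  rw [image_pi2 hg hn, image_pi5 hg hn, image_al2 hg hn, image_al3 hg hn, image_pi3 hg hn,
    image_pi4 hg hn, image_al4 hg hn, image_al5 hg hn, al6_eq_pi6 hn, al7_eq_pi7, al8_eq_pi8]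
  exact ⟨rfl,
    image_pencil_add_image_pencil (symPencil_eq g) h₂₅ (by norm_num),
    isDirectSum_image_pencil (symPencil_eq g) (symPencil_injOn hg hn) h₂₅,
    isDirectSum_image_pencil (symPencil_eq g) (symPencil_injOn hg hn) (by norm_num),
    image_pencil_add_image_pencil (skewPencil_eq g) h₃₄ (by norm_num),
    isDirectSum_image_pencil (skewPencil_eq g) (skewPencil_injOn hg b hn) h₃₄,
    isDirectSum_image_pencil (skewPencil_eq g) (skewPencil_injOn hg b hn) (by norm_num),
    rfl, rfl, rfl⟩

end GCT
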